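/- Let F be a field and p a prime number. Then D = ⋃_{n≥0} F[X^{1/p^n}, X^{-1/p^n}] is a Bézout domain of Krull dimension one, and D is not a Dedekind domain. -/

import Mathlib

/-!
`D` is the directed union of the subrings `Dₙ`, each the image of the principal ideal domain
`F[T, T⁻¹]` under `T ↦ X^{1/pⁿ}`, and any two elements of `D` lie in a common `Dₙ`. Hence a pair
`x, y` generates the image of a principal ideal of `F[T, T⁻¹]`, and a chain of primes
`0 < P < M` of `D` contracts to such a chain in some `F[T, T⁻¹]`; so `D` is Bézout of dimension
at most one. `D` is not Noetherian, hence neither a field nor Dedekind: the principal ideals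
`(X^{1/pⁿ} - 1)` strictly increase, because the map `F[G] → F[G ⧸ ⟨1/pⁿ⟩]` kills `X^{1/pⁿ} - 1`
but not `X^{1/pⁿ⁺¹} - 1`.
-/

set_option synthInstance.maxHeartbeats 1000000
set_option maxHeartbeats 1000000

open Polynomial AddMonoidAlgebra

noncomputable section

/-- The subgroup of `ℚ` generated by `{1/pⁿ : n ∈ ℕ}`. -/
def expGroup (p : ℕ) : AddSubgroup ℚ :=
  AddSubgroup.closure (Set.range fun n : ℕ => ((p : ℚ) ^ n)⁻¹)

instance (p : ℕ) : UniqueSums (expGroup p) :=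
  UniqueSums.of_injective_addHom ((expGroup p).subtype : _ →+ ℚ).toAddHom
    Subtype.val_injective inferInstance

/-- `D = ⋃_{n≥0} F[X^{1/pⁿ}, X^{-1/pⁿ}]`, realized as the group algebra `F[X;G]`
where `G` is the subgroup of `ℚ` generated by `{1/pⁿ : n ≥ 0}`. -/
abbrev LaurentUnion (F : Type*) [Field F] (p : ℕ) : Type _ :=
  AddMonoidAlgebra F (expGroup p)

instance (F : Type*) [Field F] (p : ℕ) : IsDomain (LaurentUnion F p) :=
  NoZeroDivisors.to_isDomain _

/-- The element `1/pⁿ` of the subgroup `G`. -/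
def expGen (p n : ℕ) : expGroup p :=
  ⟨((p : ℚ) ^ n)⁻¹, AddSubgroup.subset_closure ⟨n, rfl⟩⟩

/-- The monomial `X^{1/pⁿ}` in `D`. -/
def XRoot (F : Type*) [Field F] (p n : ℕ) : LaurentUnion F p :=
  AddMonoidAlgebra.single (expGen p n) 1

/-- The subring `Dₙ = F[X^{1/pⁿ}, X^{-1/pⁿ}]` of `D`, as a subalgebra. -/
def DSub (F : Type*) [Field F] (p n : ℕ) : Subalgebra F (LaurentUnion F p) :=
  Algebra.adjoin F {XRoot F p n, AddMonoidAlgebra.single (-expGen p n) 1}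

/-- The subring `Rₙ = F[X^{1/pⁿ}]` of `D`, as a subalgebra. -/
def RSub (F : Type*) [Field F] (p n : ℕ) : Subalgebra F (LaurentUnion F p) :=
  Algebra.adjoin F {XRoot F p n}

lemma XRoot_mem_DSub (F : Type*) [Field F] (p n : ℕ) : XRoot F p n ∈ DSub F p n :=
  Algebra.subset_adjoin (by simp)

lemma aeval_XRoot_mem_DSub (F : Type*) [Field F] (p n : ℕ) (f : Polynomial F) :
    Polynomial.aeval (XRoot F p n) f ∈ DSub F p n :=
  Algebra.adjoin_le (Set.singleton_subset_iff.mpr (XRoot_mem_DSub F p n))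
    (Polynomial.aeval_mem_adjoin_singleton _ _)

lemma aeval_XRoot_mem_RSub (F : Type*) [Field F] (p n : ℕ) (f : Polynomial F) :
    Polynomial.aeval (XRoot F p n) f ∈ RSub F p n :=
  Polynomial.aeval_mem_adjoin_singleton _ _

lemma XRoot_pow (F : Type*) [Field F] {p : ℕ} (hp : p ≠ 0) {m n : ℕ} (h : m ≤ n) :
    XRoot F p n ^ p ^ (n - m) = XRoot F p m := by
  rw [XRoot, XRoot, AddMonoidAlgebra.single_pow, one_pow]
  congr 1
  ext
  have hp' : (p : ℚ) ≠ 0 := Nat.cast_ne_zero.mpr hp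
  push_cast
  rw [nsmul_eq_mul]
  push_cast [expGen]
  field_simp
  rw [← pow_add, Nat.sub_add_cancel h]

lemma DSub_mono (F : Type*) [Field F] {p : ℕ} (hp : p ≠ 0) {m n : ℕ} (h : m ≤ n) :
    DSub F p m ≤ DSub F p n := by
  apply Algebra.adjoin_le
  rintro x (rfl | rfl)
  · rw [← XRoot_pow F hp h]
    exact pow_mem (Algebra.subset_adjoin (by simp)) _
  · rw [show (AddMonoidAlgebra.single (-expGen p m) 1 : LaurentUnion F p)
        = (AddMonoidAlgebra.single (-expGen p n) 1 : LaurentUnion F p) ^ p ^ (n - m) from ?_]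
    · exact pow_mem (Algebra.subset_adjoin (by simp)) _
    · rw [AddMonoidAlgebra.single_pow, one_pow]
      congr 1
      ext
      have hp' : (p : ℚ) ≠ 0 := Nat.cast_ne_zero.mpr hp
      push_cast
      rw [nsmul_eq_mul]
      push_cast [expGen]
      field_simp
      rw [← pow_add, Nat.add_sub_of_le h]

theorem IsLocalization.isPrincipalIdealRing {R S : Type*} [CommRing R] [CommRing S] [Algebra R S]
    (M : Submonoid R) [IsLocalization M S] [IsPrincipalIdealRing R] : IsPrincipalIdealRing S :=
  ⟨fun J => IsLocalization.map_under M S J ▸ (IsPrincipalIdealRing.principal _).map_ringHom _⟩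

instance (F : Type*) [Field F] : IsPrincipalIdealRing (LaurentPolynomial F) :=
  IsLocalization.isPrincipalIdealRing (Submonoid.powers (Polynomial.X : F[X]))

section DirectedUnion

variable {ι R S : Type*} [CommRing R] [CommRing S]

theorem IsBezout.of_forall_mem_range [IsBezout S] (φ : ι → S →+* R)
    (hφ : ∀ x y : R, ∃ i, x ∈ (φ i).range ∧ y ∈ (φ i).range) : IsBezout R := by
  refine IsBezout.iff_span_pair_isPrincipal.mpr fun x y => ?_
  obtain ⟨i, ⟨a, rfl⟩, ⟨b, rfl⟩⟩ := hφ x y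
  simpa [Ideal.map_span, Set.image_pair] using
    (IsBezout.span_pair_isPrincipal a b).map_ringHom (φ i)

theorem Ring.KrullDimLE.one_of_forall_mem_range [NoZeroDivisors S] [Ring.KrullDimLE 1 S]
    (φ : ι → S →+* R) (hφ : ∀ x y : R, ∃ i, x ∈ (φ i).range ∧ y ∈ (φ i).range) :
    Ring.KrullDimLE 1 R := by
  refine Ring.KrullDimLE.mk₁' fun P hP0 hP => ?_
  obtain ⟨M, hM, hPM⟩ := P.exists_le_maximal hP.ne_top
  obtain ⟨x, hxP, hx0⟩ := Submodule.exists_mem_ne_zero_of_ne_bot hP0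
  suffices M ≤ P from hPM.antisymm this ▸ hM
  intro y hyM
  by_contra hyP
  obtain ⟨i, ⟨a, rfl⟩, ⟨b, rfl⟩⟩ := hφ x y
  have hQ : (P.comap (φ i)).IsMaximal := by
    refine (Ideal.IsPrime.comap (φ i)).isMaximal_of_ne_bot fun h => hx0 ?_
    rw [show a = 0 from (Ideal.mem_bot).mp (h ▸ Ideal.mem_comap.mpr hxP), map_zero]
  have hPM' : P.comap (φ i) = M.comap (φ i) :=
    hQ.eq_of_le (Ideal.IsPrime.comap (φ i) (hK := hM.isPrime)).ne_top (Ideal.comap_mono hPM)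
  exact hyP (Ideal.mem_comap.mp (hPM' ▸ Ideal.mem_comap.mpr hyM))

end DirectedUnion

theorem ringKrullDim_eq_one_of_not_isField {R : Type*} [CommRing R] [IsDomain R]
    [Ring.KrullDimLE 1 R] (h : ¬ IsField R) : ringKrullDim R = 1 := by
  refine le_antisymm (Ring.krullDimLE_iff.mp ‹_›) (not_lt.mp fun hlt => h ?_)
  have : Ring.KrullDimLE 0 R := Ring.krullDimLE_iff.mpr (Order.le_of_lt_succ hlt)
  exact Ring.KrullDimLE.isField_of_isDomain

theorem AddMonoidAlgebra.mem_zmultiples_of_single_sub_one_dvd {k G : Type*} [CommRing k]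
    [Nontrivial k] [AddCommGroup G] {g h : G} (hdvd : single h (1 : k) - 1 ∣ single g 1 - 1) :
    g ∈ AddSubgroup.zmultiples h := by
  -- In `k[G ⧸ ⟨h⟩]` the element `X^h - 1` vanishes, so `X^g - 1` must vanish too.
  set H := AddSubgroup.zmultiples h
  set π := mapDomainRingHom k (QuotientAddGroup.mk' H)
  have hπ (a : G) : π (single a 1) = single (a : G ⧸ H) 1 := mapDomain_single
  have hπh : π (single h 1 - 1) = 0 := by
    rw [map_sub, map_one, hπ, (QuotientAddGroup.eq_zero_iff h).mpr (AddSubgroup.mem_zmultiples h),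
      one_def, sub_self]
  obtain ⟨c, hc⟩ := hdvd
  have hg : single (g : G ⧸ H) (1 : k) = single 0 1 := by
    have := congrArg π hc
    rwa [map_mul, hπh, zero_mul, map_sub, map_one, hπ, one_def, sub_eq_zero] at this
  exact (QuotientAddGroup.eq_zero_iff g).mp (single_left_injective one_ne_zero hg)

section ExpGroup

variable {p : ℕ}

theorem expGen_eq_pow_nsmul (hp : p ≠ 0) {m n : ℕ} (h : m ≤ n) :
    expGen p m = p ^ (n - m) • expGen p n := by
  have hp' : (p : ℚ) ≠ 0 := Nat.cast_ne_zero.mpr hp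
  ext
  push_cast [expGen, nsmul_eq_mul]
  field_simp
  rw [← pow_add, Nat.add_sub_of_le h]

theorem monotone_zmultiples_expGen (hp : p ≠ 0) :
    Monotone fun n => AddSubgroup.zmultiples (expGen p n) := fun _ _ h =>
  AddSubgroup.zmultiples_le_of_mem
    (expGen_eq_pow_nsmul hp h ▸ nsmul_mem (AddSubgroup.mem_zmultiples _) _)

theorem mem_iSup_zmultiples_expGen (g : expGroup p) :
    g ∈ ⨆ n, AddSubgroup.zmultiples (expGen p n) := by
  obtain ⟨q, hq⟩ := g
  induction hq using AddSubgroup.closure_induction with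
  | mem q hq =>
    obtain ⟨n, rfl⟩ := hq
    exact AddSubgroup.mem_iSup_of_mem n (AddSubgroup.mem_zmultiples (expGen p n))
  | zero => exact zero_mem _
  | add _ _ _ _ hx hy => exact add_mem hx hy
  | neg _ _ hx => exact neg_mem hx

theorem exists_finset_subset_zmultiples_expGen (hp : p ≠ 0) (s : Finset (expGroup p)) :
    ∃ n, ↑s ⊆ (AddSubgroup.zmultiples (expGen p n) : Set (expGroup p)) := by
  have hmono : Monotone fun n => (AddSubgroup.zmultiples (expGen p n) : Set (expGroup p)) :=
    fun _ _ h => SetLike.coe_mono (monotone_zmultiples_expGen hp h)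
  refine hmono.directed_le.exists_mem_subset_of_finset_subset_biUnion fun g _ => ?_
  exact Set.mem_iUnion.mpr <| (AddSubgroup.mem_iSup_of_directed
    (monotone_zmultiples_expGen hp).directed_le).mp (mem_iSup_zmultiples_expGen g)

theorem expGen_succ_notMem_zmultiples (hp : 1 < p) (n : ℕ) :
    expGen p (n + 1) ∉ AddSubgroup.zmultiples (expGen p n) := by
  rintro ⟨k, hk⟩
  have hp' : (p : ℚ) ≠ 0 := by positivity
  have hkq : (k : ℚ) * p = 1 := by
    have := congrArg Subtype.val hk
    simp only [expGen, AddSubgroup.coe_zsmul, zsmul_eq_mul] at this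
    field_simp at this
    apply mul_right_cancel₀ (pow_ne_zero n hp')
    linear_combination this
  have hkz : k * (p : ℤ) = 1 := by exact_mod_cast hkq
  have := Int.eq_one_or_neg_one_of_mul_eq_one' hkz
  omega

end ExpGroup

namespace LaurentUnion

variable {F : Type*} [Field F] {p : ℕ}

variable (F p) in
/-- `T ↦ X^{1/pⁿ}`; its image is `Dₙ`. -/
def ofLevel (n : ℕ) : LaurentPolynomial F →+* LaurentUnion F p :=
  mapDomainRingHom F (zmultiplesHom _ (expGen p n))

theorem mem_range_ofLevel (hp : p ≠ 0) {n : ℕ} {x : LaurentUnion F p}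
    (hx : ↑x.coeff.support ⊆ (AddSubgroup.zmultiples (expGen p n) : Set (expGroup p))) :
    x ∈ (ofLevel F p n).range := by
  have hinj : Function.Injective fun k : ℤ => k • expGen p n := by
    intro k l hkl
    have hn : ((p : ℚ) ^ n)⁻¹ ≠ 0 := by simp [hp]
    simpa [expGen, hn] using congrArg Subtype.val hkl
  exact ⟨comapDomain _ hinj x, mapDomain_comapDomain hx hinj⟩

theorem exists_mem_range_ofLevel (hp : p ≠ 0) (x y : LaurentUnion F p) :
    ∃ n, x ∈ (ofLevel F p n).range ∧ y ∈ (ofLevel F p n).range := by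
  classical
  obtain ⟨n, hn⟩ := exists_finset_subset_zmultiples_expGen hp (x.coeff.support ∪ y.coeff.support)
  rw [Finset.coe_union, Set.union_subset_iff] at hn
  exact ⟨n, mem_range_ofLevel hp hn.1, mem_range_ofLevel hp hn.2⟩

theorem isBezout (hp : p ≠ 0) : IsBezout (LaurentUnion F p) :=
  .of_forall_mem_range _ (exists_mem_range_ofLevel hp)

theorem krullDimLE_one (hp : p ≠ 0) : Ring.KrullDimLE 1 (LaurentUnion F p) :=
  .one_of_forall_mem_range _ (exists_mem_range_ofLevel hp)

theorem XRoot_succ_sub_one_dvd (hp : p ≠ 0) (n : ℕ) :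
    XRoot F p (n + 1) - 1 ∣ XRoot F p n - 1 := by
  have h := XRoot_pow F hp (Nat.le_add_right n 1)
  rw [Nat.add_sub_cancel_left, pow_one] at h
  simpa [h] using sub_dvd_pow_sub_pow (XRoot F p (n + 1)) 1 p

theorem not_XRoot_sub_one_dvd_succ (hp : 1 < p) (n : ℕ) :
    ¬ XRoot F p n - 1 ∣ XRoot F p (n + 1) - 1 := fun h =>
  expGen_succ_notMem_zmultiples hp n (mem_zmultiples_of_single_sub_one_dvd h)

theorem strictMono_span_XRoot_sub_one (hp : 1 < p) :
    StrictMono fun n => Ideal.span {XRoot F p n - 1} :=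
  strictMono_nat_of_lt_succ fun n => lt_of_le_not_ge
    (Ideal.span_singleton_le_span_singleton.mpr (XRoot_succ_sub_one_dvd (by omega) n))
    (mt Ideal.span_singleton_le_span_singleton.mp (not_XRoot_sub_one_dvd_succ hp n))

theorem not_isNoetherianRing (hp : 1 < p) : ¬ IsNoetherianRing (LaurentUnion F p) := fun _ =>
  not_strictMono_of_wellFoundedGT _ (strictMono_span_XRoot_sub_one (F := F) hp)

end LaurentUnion

/-- For a field `F` and a prime `p`, the ring
`D = ⋃_{n≥0} F[X^{1/pⁿ}, X^{-1/pⁿ}]` is a Bézout domain of Krull dimension one,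
and `D` is not a Dedekind domain. -/
theorem laurentUnion_bezout_dimOne_not_dedekind (F : Type*) [Field F] (p : ℕ)
    (hp : p.Prime) :
    IsBezout (LaurentUnion F p) ∧ ringKrullDim (LaurentUnion F p) = 1 ∧
      ¬ IsDedekindDomain (LaurentUnion F p) := by
  have hD : ¬ IsNoetherianRing (LaurentUnion F p) :=
    LaurentUnion.not_isNoetherianRing hp.one_lt
  have := LaurentUnion.krullDimLE_one (F := F) hp.ne_zero
  have hF : ¬ IsField (LaurentUnion F p) := fun hF => by
    have := hF.isPrincipalIdealRing
    exact hD inferInstance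
  exact ⟨LaurentUnion.isBezout hp.ne_zero, ringKrullDim_eq_one_of_not_isField hF,
    fun _ => hD inferInstance⟩
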